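/- arXiv:2409.15070 — 2 statements merged into one kernel-verified Lean document; each statement's English description precedes it below -/
import Mathlib

section
/- (Sklar's theorem, existence direction.) Let d ≥ 1, let μ be a probability measure on ℝ^d with joint cumulative distribution function H(x₁, …, x_d) = μ{ y ∈ ℝ^d : y_i ≤ x_i for all i } and one-dimensional marginal cumulative distribution functions F_i(s) = μ{ y ∈ ℝ^d : y_i ≤ s }. Then there exists a probability measure ν on ℝ^d each of whose one-dimensional marginals is the uniform distribution on [0,1], such that, with C(u₁, …, u_d) = ν{ v ∈ ℝ^d : v_i ≤ u_i for all i }, one has H(x₁, …, x_d) = C(F₁(x₁), …, F_d(x_d)) for all (x₁, …, x_d) ∈ ℝ^d. -/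
open MeasureTheory ProbabilityTheory Set Filter Topology Function

namespace SklarAux

/-- The uniform probability measure on `[0,1]`. -/
noncomputable def Pv : Measure ℝ := volume.restrict (Set.Icc 0 1)

instance : IsProbabilityMeasure Pv :=
  ⟨by simp [Pv, Measure.restrict_apply, Real.volume_Icc]⟩

lemma Pv_apply (s : Set ℝ) (hs : MeasurableSet s) : Pv s = volume (s ∩ Icc 0 1) := by
  simp [Pv, Measure.restrict_apply hs]

lemma Pv_Iic {a : ℝ} (h1 : a ≤ 1) : Pv (Iic a) = ENNReal.ofReal a := by
  rw [Pv_apply _ measurableSet_Iic]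
  rcases le_or_gt 0 a with h0 | h0
  · have : Iic a ∩ Icc 0 1 = Icc 0 a := by
      ext t; simp only [mem_inter_iff, mem_Iic, mem_Icc]
      constructor
      · rintro ⟨h, h2, _⟩; exact ⟨h2, h⟩
      · rintro ⟨h2, h⟩; exact ⟨h, h2, h.trans h1⟩
    rw [this, Real.volume_Icc, sub_zero]
  · have : Iic a ∩ Icc 0 1 = ∅ := by
      ext t; simp only [mem_inter_iff, mem_Iic, mem_Icc, mem_empty_iff_false, iff_false]
      rintro ⟨h, h2, _⟩; linarith
    rw [this]
    simp [ENNReal.ofReal_eq_zero, h0.le]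

/-- The `v`-null set: complement of `(0,1]`. -/
def Nv : Set ℝ := (Icc (0:ℝ) 1)ᶜ ∪ Iic 0

lemma Pv_Nv : Pv Nv = 0 := by
  refine measure_union_null ?_ ?_
  · simp [Pv, Measure.restrict_apply (measurableSet_Icc.compl)]
  · rw [Pv_apply _ measurableSet_Iic]
    have : Iic (0:ℝ) ∩ Icc 0 1 = {0} := by
      ext t; simp only [mem_inter_iff, mem_Iic, mem_Icc, mem_singleton_iff]
      constructor
      · rintro ⟨h, h2, _⟩; exact le_antisymm h h2
      · rintro rfl; exact ⟨le_rfl, le_rfl, zero_le_one⟩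
    simp [this]

lemma not_mem_Nv {v : ℝ} (h : v ∉ Nv) : 0 < v ∧ v ≤ 1 := by
  simp only [Nv, mem_union, mem_compl_iff, mem_Icc, mem_Iic, not_or, not_not, not_le] at h
  exact ⟨h.2, h.1.2⟩

lemma measure_eq_of_null {α : Type*} [MeasurableSpace α] (μ : Measure α) {A B N : Set α}
    (hN : μ N = 0) (hAB : A ⊆ B ∪ N) (hBA : B ⊆ A ∪ N) : μ A = μ B := by
  refine le_antisymm ?_ ?_
  · calc μ A ≤ μ (B ∪ N) := measure_mono hAB
      _ ≤ μ B + μ N := measure_union_le _ _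
      _ = μ B := by rw [hN, add_zero]
  · calc μ B ≤ μ (A ∪ N) := measure_mono hBA
      _ ≤ μ A + μ N := measure_union_le _ _
      _ = μ A := by rw [hN, add_zero]

variable (m : Measure ℝ) [IsProbabilityMeasure m]

/-- Key lemma: the part of a level set of the cdf strictly to the right of `x` is null. -/
lemma level_null (x : ℝ) :
    m {t | x < t ∧ cdf m t ≤ cdf m x} = 0 := by
  set f := cdf m with hf
  set S : Set ℝ := {t | x < t ∧ f t ≤ f x} with hS
  rcases S.eq_empty_or_nonempty with h | hne
  · simp [h]
  by_cases hbd : BddAbove S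
  · set c := sSup S with hc
    have hxc : x < c := by
      obtain ⟨s, hs⟩ := hne
      exact lt_of_lt_of_le hs.1 (le_csSup hbd hs)
    by_cases hcS : f c ≤ f x
    · have hsub : S ⊆ Ioc x c := fun s hs => ⟨hs.1, le_csSup hbd hs⟩
      refine measure_mono_null hsub ?_
      rw [← measure_cdf m]
      rw [StieltjesFunction.measure_Ioc]
      simp [ENNReal.ofReal_eq_zero, sub_nonpos, hcS]
      exact hcS
    · have hsub : S ⊆ Ioo x c := by
        intro s hs
        refine ⟨hs.1, lt_of_le_of_ne (le_csSup hbd hs) ?_⟩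
        rintro rfl
        exact hcS hs.2
      refine measure_mono_null hsub ?_
      rw [← measure_cdf m, StieltjesFunction.measure_Ioo]
      have hll : leftLim f c ≤ f x := by
        refine le_of_tendsto ((monotone_cdf (μ := m)).tendsto_leftLim c) ?_
        filter_upwards [Ioo_mem_nhdsLT hxc] with t ht
        obtain ⟨s, hsS, hts⟩ := exists_lt_of_lt_csSup hne ht.2
        exact ((monotone_cdf (μ := m)) hts.le).trans hsS.2
      simp [ENNReal.ofReal_eq_zero, sub_nonpos, hll]
      exact hll
  · have hall : (1:ℝ) ≤ f x := by
      refine le_of_tendsto (tendsto_cdf_atTop (μ := m)) ?_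
      refine Eventually.of_forall fun t => ?_
      obtain ⟨s, hsS, hts⟩ := not_bddAbove_iff.1 hbd t
      exact ((monotone_cdf (μ := m)) hts.le).trans hsS.2
    have hfx : f x = 1 := le_antisymm (cdf_le_one (μ := m) x) hall
    have hsub : S ⊆ Ioi x := fun s hs => hs.1
    refine measure_mono_null hsub ?_
    have : (Ioi x) = (Iic x)ᶜ := by rw [compl_Iic]
    rw [this, measure_compl measurableSet_Iic (measure_ne_top _ _), ← ofReal_cdf (μ := m) x]
    rw [show (cdf m) x = f x from rfl, hfx]
    simp

lemma cdf_leftLim_nonneg (x : ℝ) : 0 ≤ leftLim (cdf m) x :=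
  le_trans (cdf_nonneg (μ := m) (x - 1))
    (Monotone.le_leftLim (monotone_cdf (μ := m)) (by linarith))

lemma leftLim_le_cdf (x : ℝ) : leftLim (cdf m) x ≤ cdf m x :=
  Monotone.leftLim_le (monotone_cdf (μ := m)) le_rfl

lemma cdf_measure_Iio (x : ℝ) :
    m (Iio x) = ENNReal.ofReal (leftLim (cdf m) x) := by
  have hd : Disjoint (Iio x) ({x} : Set ℝ) := by simp
  have h1 : m {x} + m (Iio x) = m (Iic x) := by
    rw [add_comm, ← measure_union hd (measurableSet_singleton x), Iio_union_right]
  have hsing : m {x} = ENNReal.ofReal (cdf m x - leftLim (cdf m) x) := by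
    conv_lhs => rw [← measure_cdf m]
    rw [StieltjesFunction.measure_singleton]
  have hIic : m (Iic x) = ENNReal.ofReal (cdf m x) := (ofReal_cdf (μ := m) x).symm
  rw [hsing, hIic] at h1
  have h2 : ENNReal.ofReal (cdf m x)
      = ENNReal.ofReal (cdf m x - leftLim (cdf m) x) + ENNReal.ofReal (leftLim (cdf m) x) := by
    rw [← ENNReal.ofReal_add (by linarith [leftLim_le_cdf m x]) (cdf_leftLim_nonneg m x)]
    ring_nf
  rw [h2] at h1
  exact (ENNReal.add_right_inj ENNReal.ofReal_ne_top).1 h1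

lemma measurable_g :
    Measurable (fun p : ℝ × ℝ =>
      leftLim (cdf m) p.1 + p.2 * (cdf m p.1 - leftLim (cdf m) p.1)) := by
  have h1 : Measurable (fun t : ℝ => cdf m t) := (monotone_cdf (μ := m)).measurable
  have h2 : Measurable (fun t : ℝ => leftLim (cdf m) t) :=
    ((monotone_cdf (μ := m)).leftLim).measurable
  exact (h2.comp measurable_fst).add
    (measurable_snd.mul ((h1.comp measurable_fst).sub (h2.comp measurable_fst)))

lemma mem_A_of_not_Nv {a t v : ℝ} (hv : v ∉ Nv)
    (h : leftLim (cdf m) t + v * (cdf m t - leftLim (cdf m) t) ≤ a) :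
    leftLim (cdf m) t ≤ a ∧ cdf m t - leftLim (cdf m) t ≥ 0 := by
  obtain ⟨hv0, hv1⟩ := not_mem_Nv hv
  have hd : 0 ≤ cdf m t - leftLim (cdf m) t := by linarith [leftLim_le_cdf m t]
  exact ⟨by nlinarith, hd⟩

/-- The distributional transform of `m` pushes `m ⊗ Unif[0,1]` to `Unif[0,1]`. -/
lemma transform_Iic (a : ℝ) :
    (m.prod Pv) {p : ℝ × ℝ |
        leftLim (cdf m) p.1 + p.2 * (cdf m p.1 - leftLim (cdf m) p.1) ≤ a}
      = Pv (Iic a) := by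
  set f : ℝ → ℝ := fun t => cdf m t with hfdef
  set lL : ℝ → ℝ := fun t => leftLim (cdf m) t with hlLdef
  have hmono : Monotone f := monotone_cdf (μ := m)
  have hlle : ∀ t, lL t ≤ f t := fun t => leftLim_le_cdf m t
  have hl0 : ∀ t, 0 ≤ lL t := fun t => cdf_leftLim_nonneg m t
  have hf1 : ∀ t, f t ≤ 1 := fun t => cdf_le_one (μ := m) t
  have hf0 : ∀ t, 0 ≤ f t := fun t => cdf_nonneg (μ := m) t
  have hlef : ∀ {s t : ℝ}, s < t → f s ≤ lL t := fun h => hmono.le_leftLim h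
  set A : Set (ℝ × ℝ) := {p : ℝ × ℝ | lL p.1 + p.2 * (f p.1 - lL p.1) ≤ a} with hA
  have hAmeas : MeasurableSet A := (measurable_g m) measurableSet_Iic
  rcases lt_or_ge a 0 with ha | ha0
  · -- a < 0 : both sides zero
    have hsub : A ⊆ univ ×ˢ Nv := by
      rintro ⟨t, v⟩ hp
      by_contra hc
      simp only [mem_prod, mem_univ, true_and] at hc
      obtain ⟨hv0, hv1⟩ := not_mem_Nv hc
      have hd : 0 ≤ f t - lL t := by linarith [hlle t]
      have : (0:ℝ) ≤ lL t + v * (f t - lL t) := by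
        have := mul_nonneg hv0.le hd
        linarith [hl0 t]
      have := hp
      simp only [hA, mem_setOf_eq] at this
      linarith
    have hL : (m.prod Pv) A = 0 := by
      refine measure_mono_null hsub ?_
      rw [Measure.prod_prod, Pv_Nv, mul_zero]
    rw [hL, Pv_Iic (by linarith)]
    simp [ENNReal.ofReal_eq_zero, ha.le]
  rcases le_or_gt 1 a with ha1 | ha1
  · -- 1 ≤ a : both sides one
    have hsub : Aᶜ ⊆ univ ×ˢ Nv := by
      rintro ⟨t, v⟩ hp
      by_contra hc
      simp only [mem_prod, mem_univ, true_and] at hc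
      obtain ⟨hv0, hv1⟩ := not_mem_Nv hc
      have hd : 0 ≤ f t - lL t := by linarith [hlle t]
      have hle : lL t + v * (f t - lL t) ≤ f t := by nlinarith
      exact hp (by simp only [hA, mem_setOf_eq]; linarith [hf1 t])
    have hcompl : (m.prod Pv) Aᶜ = 0 := by
      refine measure_mono_null hsub ?_
      rw [Measure.prod_prod, Pv_Nv, mul_zero]
    rw [(prob_compl_eq_zero_iff hAmeas).1 hcompl]
    have hicc : Iic a ∩ Icc (0:ℝ) 1 = Icc 0 1 :=
      inter_eq_self_of_subset_right fun t ht => le_trans ht.2 ha1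
    rw [Pv_apply _ measurableSet_Iic, hicc, Real.volume_Icc]
    norm_num
  rcases eq_or_lt_of_le ha0 with ha0' | ha0
  · -- a = 0 : both sides zero
    have hS0 : m {t | f t ≤ 0} = 0 := by
      rcases ({t | f t ≤ 0}).eq_empty_or_nonempty with h | ⟨t0, ht0⟩
      · simp [h]
      have hft0 : f t0 = 0 := le_antisymm ht0 (hf0 t0)
      have hsub : {t | f t ≤ 0} ⊆ Iic t0 ∪ {t | t0 < t ∧ cdf m t ≤ cdf m t0} := by
        intro t ht
        rcases le_or_gt t t0 with h | h
        · exact Or.inl h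
        · exact Or.inr ⟨h, by
            show f t ≤ f t0
            rw [hft0]; exact ht⟩
      refine measure_mono_null hsub (measure_union_null ?_ (level_null m t0))
      rw [← ofReal_cdf (μ := m) t0]
      simp [ENNReal.ofReal_eq_zero, show cdf m t0 = f t0 from rfl, hft0]
    have hsub : A ⊆ (univ ×ˢ Nv) ∪ ({t | f t ≤ 0} ×ˢ univ) := by
      rintro ⟨t, v⟩ hp
      by_cases hv : v ∈ Nv
      · exact Or.inl ⟨mem_univ _, hv⟩
      · obtain ⟨hv0, hv1⟩ := not_mem_Nv hv
        have hd : 0 ≤ f t - lL t := by linarith [hlle t]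
        have hg : lL t + v * (f t - lL t) ≤ a := hp
        refine Or.inr ⟨?_, mem_univ _⟩
        show f t ≤ 0
        have h1 : lL t ≤ 0 := by nlinarith [hl0 t]
        have h2 : v * (f t - lL t) ≤ 0 := by nlinarith [hl0 t]
        nlinarith
    have hL : (m.prod Pv) A = 0 := by
      refine measure_mono_null hsub (measure_union_null ?_ ?_)
      · rw [Measure.prod_prod, Pv_Nv, mul_zero]
      · rw [Measure.prod_prod, hS0, zero_mul]
    rw [hL, Pv_Iic ha1.le, ← ha0']
    simp
  -- main case : 0 < a < 1
  set Q : Set ℝ := {t | a ≤ f t} with hQ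
  have hQne : Q.Nonempty := by
    obtain ⟨t1, ht1⟩ := ((tendsto_cdf_atTop (μ := m)).eventually_const_le ha1).exists
    exact ⟨t1, ht1⟩
  have hQbd : BddBelow Q := by
    obtain ⟨t0, ht0⟩ :=
      eventually_atBot.1 ((tendsto_cdf_atBot (μ := m)).eventually_lt_const ha0)
    refine ⟨t0, fun s hs => ?_⟩
    by_contra hc
    push_neg at hc
    have h1 : f s < a := lt_of_le_of_lt (hmono hc.le) (ht0 t0 le_rfl)
    exact absurd (hs : a ≤ f s) (not_le.2 h1)
  set q : ℝ := sInf Q with hq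
  have hfq : a ≤ f q := by
    have hrc : Tendsto f (𝓝[>] q) (𝓝 (f q)) :=
      ((cdf m).right_continuous q).mono_left (nhdsWithin_mono _ Ioi_subset_Ici_self)
    refine ge_of_tendsto hrc ?_
    filter_upwards [self_mem_nhdsWithin] with t (ht : q < t)
    obtain ⟨s, hsQ, hst⟩ := (csInf_lt_iff hQbd hQne).1 ht
    exact le_trans hsQ (hmono hst.le)
  have hlq : lL q ≤ a := by
    refine le_of_tendsto (hmono.tendsto_leftLim q) ?_
    filter_upwards [self_mem_nhdsWithin] with t (ht : t < q)
    by_contra hc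
    push_neg at hc
    exact absurd (csInf_le hQbd (le_of_lt hc : a ≤ f t)) (not_le.2 ht)
  set Δ : ℝ := f q - lL q with hΔ
  have hΔ0 : 0 ≤ Δ := by simp only [hΔ, sub_nonneg]; exact hlle q
  set Vq : Set ℝ := {v : ℝ | lL q + v * Δ ≤ a} with hVq
  have hVqmeas : MeasurableSet Vq := by
    have : Measurable fun v : ℝ => lL q + v * Δ := by fun_prop
    exact this measurableSet_Iic
  set S : Set ℝ := {t | q < t ∧ f t ≤ f q} with hSdef
  set N : Set (ℝ × ℝ) := (univ ×ˢ Nv) ∪ (S ×ˢ univ) with hNdef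
  have hN : (m.prod Pv) N = 0 := by
    refine measure_union_null ?_ ?_
    · rw [Measure.prod_prod, Pv_Nv, mul_zero]
    · rw [Measure.prod_prod, level_null m q, zero_mul]
  set Good : Set (ℝ × ℝ) := (Iio q ×ˢ univ) ∪ ({q} ×ˢ Vq) with hGood
  have hAG : A ⊆ Good ∪ N := by
    rintro ⟨t, v⟩ hp
    have hg : lL t + v * (f t - lL t) ≤ a := hp
    by_cases hv : v ∈ Nv
    · exact Or.inr (Or.inl ⟨mem_univ _, hv⟩)
    obtain ⟨hv0, hv1⟩ := not_mem_Nv hv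
    rcases lt_trichotomy t q with htq | htq | htq
    · exact Or.inl (Or.inl ⟨htq, mem_univ _⟩)
    · subst htq
      exact Or.inl (Or.inr ⟨rfl, hg⟩)
    · have h1 : f q ≤ lL t := hlef htq
      have hd : 0 ≤ f t - lL t := by linarith [hlle t]
      have h2 : v * (f t - lL t) ≤ 0 := by nlinarith
      have h3 : f t - lL t ≤ 0 := by nlinarith
      refine Or.inr (Or.inr ⟨⟨htq, ?_⟩, mem_univ _⟩)
      show f t ≤ f q
      nlinarith
  have hGA : Good ⊆ A ∪ N := by
    rintro ⟨t, v⟩ hp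
    by_cases hv : v ∈ Nv
    · exact Or.inr (Or.inl ⟨mem_univ _, hv⟩)
    obtain ⟨hv0, hv1⟩ := not_mem_Nv hv
    rcases hp with ⟨htq, -⟩ | ⟨htq, hvV⟩
    · -- t < q
      have hta : f t < a := by
        by_contra hc
        push_neg at hc
        exact absurd (csInf_le hQbd (hc : a ≤ f t)) (not_le.2 htq)
      have hd : 0 ≤ f t - lL t := by linarith [hlle t]
      refine Or.inl ?_
      show lL t + v * (f t - lL t) ≤ a
      nlinarith
    · -- t = q
      have : t = q := htq
      subst this
      exact Or.inl hvV
  have hAGood : (m.prod Pv) A = (m.prod Pv) Good :=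
    measure_eq_of_null _ hN hAG hGA
  have hdisj : Disjoint (Iio q ×ˢ (univ : Set ℝ)) ({q} ×ˢ Vq) := by
    rw [Set.disjoint_left]
    rintro ⟨t, v⟩ ⟨ht, -⟩ ⟨ht', -⟩
    simp only [mem_Iio] at ht
    simp only [mem_singleton_iff] at ht'
    exact absurd ht' (ne_of_lt ht)
  have hGoodval : (m.prod Pv) Good
      = ENNReal.ofReal (lL q) + ENNReal.ofReal Δ * Pv Vq := by
    rw [hGood, measure_union hdisj ((measurableSet_singleton q).prod hVqmeas),
      Measure.prod_prod, Measure.prod_prod, measure_univ, mul_one,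
      cdf_measure_Iio m q]
    congr 1
    conv_lhs => rw [← measure_cdf m]
    rw [StieltjesFunction.measure_singleton]
  rw [hAGood, hGoodval, Pv_Iic ha1.le]
  rcases eq_or_lt_of_le hΔ0 with hΔz | hΔpos
  · -- no jump at q
    have hfql : f q = lL q := by simp only [hΔ] at hΔz; linarith
    have hlqa : lL q = a := le_antisymm hlq (by linarith)
    rw [← hΔz]
    simp [hlqa]
  · -- jump at q
    set r : ℝ := (a - lL q) / Δ with hr
    have hVqIic : Vq = Iic r := by
      ext v
      simp only [hVq, mem_setOf_eq, mem_Iic, hr]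
      rw [le_div_iff₀ hΔpos]
      constructor <;> intro h <;> linarith
    have hr0 : 0 ≤ r := div_nonneg (by linarith) hΔ0
    have hr1 : r ≤ 1 := by
      rw [div_le_one hΔpos]
      simp only [hΔ]
      linarith
    rw [hVqIic, Pv_Iic hr1, ← ENNReal.ofReal_mul hΔ0]
    have : Δ * r = a - lL q := by
      rw [hr, mul_div_cancel₀ _ (ne_of_gt hΔpos)]
    rw [this, ← ENNReal.ofReal_add (hl0 q) (by linarith)]
    ring_nf

lemma transform_map :
    ((m.prod Pv).map fun p : ℝ × ℝ =>
      leftLim (cdf m) p.1 + p.2 * (cdf m p.1 - leftLim (cdf m) p.1)) = Pv := by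
  haveI : IsProbabilityMeasure ((m.prod Pv).map fun p : ℝ × ℝ =>
      leftLim (cdf m) p.1 + p.2 * (cdf m p.1 - leftLim (cdf m) p.1)) :=
    Measure.isProbabilityMeasure_map (measurable_g m).aemeasurable
  refine Measure.ext_of_Iic _ _ fun a => ?_
  rw [Measure.map_apply (measurable_g m) measurableSet_Iic]
  exact transform_Iic m a

end SklarAux

open SklarAux

/-- Sklar's theorem, existence direction: for any probability measure `μ` on `ℝ^d` with
joint CDF `H` and marginal CDFs `Fᵢ`, there is a probability measure `ν` on `ℝ^d` whose
one-dimensional marginals are all uniform on `[0,1]` (i.e. a copula `C`), such that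
`H(x₁, …, x_d) = C(F₁(x₁), …, F_d(x_d))` for all `x`. -/
theorem sklar_existence (d : ℕ) (hd : 1 ≤ d)
    (μ : Measure (Fin d → ℝ)) [IsProbabilityMeasure μ] :
    ∃ ν : Measure (Fin d → ℝ), IsProbabilityMeasure ν ∧
      (∀ i : Fin d, ν.map (fun v => v i) = volume.restrict (Set.Icc (0 : ℝ) 1)) ∧
      (∀ x : Fin d → ℝ,
        (μ {y | ∀ i, y i ≤ x i}).toReal
          = (ν {v | ∀ i, v i ≤ (μ {y | y i ≤ x i}).toReal}).toReal) := by
  classical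
  have hproj : ∀ i : Fin d, Measurable fun y : Fin d → ℝ => y i :=
    fun i => measurable_pi_apply i
  set mi : Fin d → Measure ℝ := fun i => μ.map (fun y => y i) with hmi
  haveI : ∀ i, IsProbabilityMeasure (mi i) :=
    fun i => Measure.isProbabilityMeasure_map (hproj i).aemeasurable
  set G : (Fin d → ℝ) × ℝ → (Fin d → ℝ) := fun p i =>
    leftLim (cdf (mi i)) (p.1 i) + p.2 * (cdf (mi i) (p.1 i) - leftLim (cdf (mi i)) (p.1 i))
    with hGdef
  have hGmeas : Measurable G := by
    refine measurable_pi_lambda _ fun i => ?_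
    have hpair : Measurable fun p : (Fin d → ℝ) × ℝ => (p.1 i, p.2) :=
      ((measurable_pi_apply i).comp measurable_fst).prodMk measurable_snd
    exact (measurable_g (mi i)).comp hpair
  refine ⟨(μ.prod Pv).map G, Measure.isProbabilityMeasure_map hGmeas.aemeasurable, ?_, ?_⟩
  · intro i
    rw [Measure.map_map (measurable_pi_apply i) hGmeas]
    have hcomp : ((fun v : Fin d → ℝ => v i) ∘ G)
        = (fun q : ℝ × ℝ =>
            leftLim (cdf (mi i)) q.1 + q.2 * (cdf (mi i) q.1 - leftLim (cdf (mi i)) q.1))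
          ∘ (Prod.map (fun y : Fin d → ℝ => y i) id) := rfl
    rw [hcomp,
      ← Measure.map_map (measurable_g (mi i)) ((measurable_pi_apply i).prodMap measurable_id),
      ← Measure.map_prod_map _ _ (measurable_pi_apply i) measurable_id,
      Measure.map_id]
    have hmi2 : Measure.map (fun y : Fin d → ℝ => y i) μ = mi i := rfl
    rw [hmi2, transform_map (mi i)]
    rfl
  · intro x
    have hFx : ∀ i, (μ {y | y i ≤ x i}).toReal = cdf (mi i) (x i) := by
      intro i
      rw [cdf_eq_real, measureReal_def]
      congr 1
      rw [Measure.map_apply (hproj i) measurableSet_Iic]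
      rfl
    simp only [hFx]
    have hTmeas : MeasurableSet {v : Fin d → ℝ | ∀ i, v i ≤ cdf (mi i) (x i)} := by
      have : {v : Fin d → ℝ | ∀ i, v i ≤ cdf (mi i) (x i)}
          = ⋂ i, (fun v : Fin d → ℝ => v i) ⁻¹' Set.Iic (cdf (mi i) (x i)) := by
        ext v; simp [Set.mem_iInter]
      rw [this]
      exact MeasurableSet.iInter fun i => (hproj i) measurableSet_Iic
    rw [Measure.map_apply hGmeas hTmeas]
    congr 1
    set S : Fin d → Set ℝ := fun i => {t | x i < t ∧ cdf (mi i) t ≤ cdf (mi i) (x i)}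
      with hSdef
    have hSnull : ∀ i, μ ((fun y : Fin d → ℝ => y i) ⁻¹' S i) = 0 := by
      intro i
      have hSm : MeasurableSet (S i) := by
        have : S i = Set.Ioi (x i) ∩ (fun t => cdf (mi i) t) ⁻¹'
            Set.Iic (cdf (mi i) (x i)) := by
          ext t; simp [hSdef, Set.mem_Ioi, and_comm]
        rw [this]
        exact measurableSet_Ioi.inter ((monotone_cdf (μ := mi i)).measurable measurableSet_Iic)
      rw [← Measure.map_apply (hproj i) hSm]
      exact level_null (mi i) (x i)
    set N : Set ((Fin d → ℝ) × ℝ) :=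
      (Set.univ ×ˢ Nv) ∪ ⋃ i, (((fun y : Fin d → ℝ => y i) ⁻¹' S i) ×ˢ Set.univ) with hNdef
    have hN : (μ.prod Pv) N = 0 := by
      refine measure_union_null ?_ (measure_iUnion_null fun i => ?_)
      · rw [Measure.prod_prod, Pv_Nv, mul_zero]
      · rw [Measure.prod_prod, hSnull i, zero_mul]
    have key : (μ.prod Pv) (G ⁻¹' {v : Fin d → ℝ | ∀ i, v i ≤ cdf (mi i) (x i)})
        = (μ.prod Pv) ({y : Fin d → ℝ | ∀ i, y i ≤ x i} ×ˢ Set.univ) := by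
      refine measure_eq_of_null _ hN ?_ ?_
      · rintro ⟨y, v⟩ hp
        simp only [Set.mem_preimage, Set.mem_setOf_eq, hGdef] at hp
        by_cases hv : v ∈ Nv
        · exact Or.inr (Or.inl ⟨Set.mem_univ _, hv⟩)
        obtain ⟨hv0, hv1⟩ := not_mem_Nv hv
        by_cases hy : ∀ i, y i ≤ x i
        · exact Or.inl ⟨hy, Set.mem_univ _⟩
        push_neg at hy
        obtain ⟨j, hj⟩ := hy
        refine Or.inr (Or.inr (Set.mem_iUnion.2 ⟨j, ⟨?_, Set.mem_univ _⟩⟩))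
        show x j < y j ∧ cdf (mi j) (y j) ≤ cdf (mi j) (x j)
        have h1 : cdf (mi j) (x j) ≤ leftLim (cdf (mi j)) (y j) :=
          (monotone_cdf (μ := mi j)).le_leftLim hj
        have h2 : leftLim (cdf (mi j)) (y j) ≤ cdf (mi j) (y j) := leftLim_le_cdf (mi j) (y j)
        have hg := hp j
        have h3 : v * (cdf (mi j) (y j) - leftLim (cdf (mi j)) (y j)) ≤ 0 := by nlinarith
        have h4 : cdf (mi j) (y j) - leftLim (cdf (mi j)) (y j) ≤ 0 := by nlinarith
        exact ⟨hj, by nlinarith⟩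
      · rintro ⟨y, v⟩ ⟨hy, -⟩
        by_cases hv : v ∈ Nv
        · exact Or.inr (Or.inl ⟨Set.mem_univ _, hv⟩)
        obtain ⟨hv0, hv1⟩ := not_mem_Nv hv
        refine Or.inl ?_
        simp only [Set.mem_preimage, Set.mem_setOf_eq, hGdef]
        intro i
        have h2 : leftLim (cdf (mi i)) (y i) ≤ cdf (mi i) (y i) := leftLim_le_cdf (mi i) (y i)
        have h3 : cdf (mi i) (y i) ≤ cdf (mi i) (x i) := (monotone_cdf (μ := mi i)) (hy i)
        nlinarith
    rw [key, Measure.prod_prod, measure_univ, mul_one]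
end

section
/- (Sklar's theorem, converse direction.) Let d ≥ 1, let ν be a probability measure on ℝ^d each of whose one-dimensional marginals is the uniform distribution on [0,1], with copula C(u₁, …, u_d) = ν{ v ∈ ℝ^d : v_i ≤ u_i for all i }, and let F₁, …, F_d be cumulative distribution functions of probability measures on ℝ. Then the function H(x₁, …, x_d) = C(F₁(x₁), …, F_d(x_d)) is the joint cumulative distribution function of a probability measure μ on ℝ^d whose i-th one-dimensional marginal has cumulative distribution function F_i, for every i = 1, …, d. -/
open MeasureTheory
open scoped Topology

noncomputable def sklarQ (m : Measure ℝ) (u : ℝ) : ℝ :=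
  sInf {y | u ≤ ProbabilityTheory.cdf m y}

lemma sklarQ_set_nonempty (m : Measure ℝ) [IsProbabilityMeasure m] {u : ℝ} (h1 : u < 1) :
    {y | u ≤ ProbabilityTheory.cdf m y}.Nonempty :=
  ((ProbabilityTheory.tendsto_cdf_atTop (μ := m)).eventually (eventually_ge_nhds h1)).exists

lemma sklarQ_set_bddBelow (m : Measure ℝ) [IsProbabilityMeasure m] {u : ℝ} (h0 : 0 < u) :
    BddBelow {y | u ≤ ProbabilityTheory.cdf m y} := by
  obtain ⟨z, hz⟩ :=
    ((ProbabilityTheory.tendsto_cdf_atBot (μ := m)).eventually (eventually_lt_nhds h0)).exists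
  exact ⟨z, fun y hy => le_of_not_gt fun h =>
    absurd hy (not_le.2 ((ProbabilityTheory.monotone_cdf m h.le).trans_lt hz))⟩

/-- Key property of the generalized inverse CDF: `Q(u) ≤ x ↔ u ≤ F(x)` for `u ∈ (0,1)`. -/
lemma sklarQ_le_iff (m : Measure ℝ) [IsProbabilityMeasure m] {u : ℝ}
    (h0 : 0 < u) (h1 : u < 1) (x : ℝ) :
    sklarQ m u ≤ x ↔ u ≤ ProbabilityTheory.cdf m x := by
  constructor
  · intro hQ
    have hm : u ≤ ProbabilityTheory.cdf m (sklarQ m u) := by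
      have hIoi : ∀ y ∈ Set.Ioi (sklarQ m u), u ≤ ProbabilityTheory.cdf m y := by
        intro y hy
        obtain ⟨s, hs, hsy⟩ := exists_lt_of_csInf_lt (sklarQ_set_nonempty m h1) hy
        exact hs.trans (ProbabilityTheory.monotone_cdf m hsy.le)
      have htend : Filter.Tendsto (ProbabilityTheory.cdf m) (𝓝[>] (sklarQ m u))
          (𝓝 (ProbabilityTheory.cdf m (sklarQ m u))) :=
        ((ProbabilityTheory.cdf m).right_continuous (sklarQ m u)).tendsto.mono_left
          (nhdsWithin_mono _ Set.Ioi_subset_Ici_self)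
      exact ge_of_tendsto htend (eventually_nhdsWithin_of_forall hIoi)
    exact hm.trans (ProbabilityTheory.monotone_cdf m hQ)
  · intro hx
    exact csInf_le (sklarQ_set_bddBelow m h0) hx

lemma sklarQ_monotoneOn (m : Measure ℝ) [IsProbabilityMeasure m] :
    MonotoneOn (sklarQ m) (Set.Ioo (0 : ℝ) 1) := fun a ha b hb hab =>
  csInf_le_csInf (sklarQ_set_bddBelow m ha.1) (sklarQ_set_nonempty m hb.2)
    (fun y hy => hab.trans hy)

/-- Sklar's theorem, converse direction: given a copula, i.e. a probability measure `ν`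
on `ℝ^d` all of whose one-dimensional marginals are uniform on `[0,1]`, with joint CDF
`C`, and given CDFs `Fᵢ` of probability measures `ρ i` on `ℝ`, the function
`H(x) = C(F₁(x₁), …, F_d(x_d))` is the joint CDF of a probability measure `μ` on `ℝ^d`
whose `i`-th one-dimensional marginal has CDF `Fᵢ`. -/
theorem sklar_converse (d : ℕ) (hd : 1 ≤ d)
    (ν : Measure (Fin d → ℝ)) [IsProbabilityMeasure ν]
    (hν : ∀ i : Fin d, ν.map (fun v => v i) = volume.restrict (Set.Icc (0 : ℝ) 1))
    (ρ : Fin d → Measure ℝ) [∀ i, IsProbabilityMeasure (ρ i)] :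
    ∃ μ : Measure (Fin d → ℝ), IsProbabilityMeasure μ ∧
      (∀ x : Fin d → ℝ,
        (μ {y | ∀ i, y i ≤ x i}).toReal
          = (ν {v | ∀ i, v i ≤ ((ρ i) (Set.Iic (x i))).toReal}).toReal) ∧
      (∀ i : Fin d, ∀ s : ℝ, μ {y | y i ≤ s} = ρ i (Set.Iic s)) := by
  set T : (Fin d → ℝ) → (Fin d → ℝ) := fun v i => sklarQ (ρ i) (v i) with hTdef
  -- a.e. all coordinates are in (0,1)
  have hG : ∀ᵐ v ∂ν, ∀ i, v i ∈ Set.Ioo (0 : ℝ) 1 := by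
    rw [MeasureTheory.ae_all_iff]
    intro i
    rw [MeasureTheory.ae_iff]
    have : {v : Fin d → ℝ | ¬ v i ∈ Set.Ioo (0 : ℝ) 1}
        = (fun v : Fin d → ℝ => v i) ⁻¹' (Set.Ioo (0 : ℝ) 1)ᶜ := rfl
    rw [this, ← Measure.map_apply (measurable_pi_apply i)
      measurableSet_Ioo.compl, hν i,
      Measure.restrict_apply measurableSet_Ioo.compl]
    refine measure_mono_null (t := {0, 1}) ?_ (Set.Countable.measure_zero (by simp) _)
    rintro x ⟨hx1, hx2⟩
    simp only [Set.mem_compl_iff, Set.mem_Ioo, not_and_or, not_lt] at hx1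
    rcases hx1 with h | h
    · exact Or.inl (le_antisymm h hx2.1)
    · exact Or.inr (le_antisymm hx2.2 h)
  -- AEMeasurability of T
  have hQae : ∀ i : Fin d, AEMeasurable (sklarQ (ρ i)) (ν.map (fun v => v i)) := by
    intro i
    rw [hν i, Measure.restrict_congr_set (Ioo_ae_eq_Icc).symm]
    exact aemeasurable_restrict_of_monotoneOn measurableSet_Ioo (sklarQ_monotoneOn (ρ i))
  have hTi : ∀ i : Fin d, AEMeasurable (fun v : Fin d → ℝ => sklarQ (ρ i) (v i)) ν :=
    fun i => (hQae i).comp_aemeasurable (measurable_pi_apply i).aemeasurable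
  have hT : AEMeasurable T ν := by
    choose g hg hgeq using fun i => hTi i
    refine ⟨fun v i => g i v, measurable_pi_lambda _ hg, ?_⟩
    have := MeasureTheory.ae_all_iff.2 hgeq
    filter_upwards [this] with v hv
    funext i
    exact hv i
  refine ⟨ν.map T, Measure.isProbabilityMeasure_map hT, ?_, ?_⟩
  · intro x
    have hmeas : MeasurableSet {y : Fin d → ℝ | ∀ i, y i ≤ x i} := by
      have : {y : Fin d → ℝ | ∀ i, y i ≤ x i} = ⋂ i, (fun y : Fin d → ℝ => y i) ⁻¹' Set.Iic (x i) := by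
        ext; simp [Set.mem_iInter]
      rw [this]
      exact MeasurableSet.iInter fun i => measurable_pi_apply i measurableSet_Iic
    rw [Measure.map_apply_of_aemeasurable hT hmeas]
    congr 1
    apply measure_congr
    rw [Filter.eventuallyEq_set]
    filter_upwards [hG] with v hv
    simp only [Set.mem_preimage, Set.mem_setOf_eq]
    refine forall_congr' fun i => ?_
    rw [show ((ρ i) (Set.Iic (x i))).toReal = ProbabilityTheory.cdf (ρ i) (x i) from
      (ProbabilityTheory.cdf_eq_real _ _).symm]
    exact sklarQ_le_iff (ρ i) (hv i).1 (hv i).2 (x i)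
  · intro i s
    have hmeas : MeasurableSet {y : Fin d → ℝ | y i ≤ s} :=
      measurable_pi_apply i measurableSet_Iic
    rw [Measure.map_apply_of_aemeasurable hT hmeas]
    set c : ℝ := ProbabilityTheory.cdf (ρ i) s with hc
    have h1 : ν (T ⁻¹' {y | y i ≤ s}) = ν ((fun v : Fin d → ℝ => v i) ⁻¹' Set.Iic c) := by
      apply measure_congr
      rw [Filter.eventuallyEq_set]
      filter_upwards [hG] with v hv
      simp only [Set.mem_preimage, Set.mem_setOf_eq, Set.mem_Iic]
      exact sklarQ_le_iff (ρ i) (hv i).1 (hv i).2 s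
    rw [h1, ← Measure.map_apply (measurable_pi_apply i) measurableSet_Iic, hν i,
      Measure.restrict_apply measurableSet_Iic]
    have hc0 : 0 ≤ c := ProbabilityTheory.cdf_nonneg (ρ i) s
    have hc1 : c ≤ 1 := ProbabilityTheory.cdf_le_one (ρ i) s
    have : Set.Iic c ∩ Set.Icc (0 : ℝ) 1 = Set.Icc 0 c := by
      ext t
      simp only [Set.mem_inter_iff, Set.mem_Iic, Set.mem_Icc]
      exact ⟨fun ⟨h, h0, _⟩ => ⟨h0, h⟩, fun ⟨h0, h⟩ => ⟨h, h0, h.trans hc1⟩⟩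
    rw [this, Real.volume_Icc, sub_zero, hc, ProbabilityTheory.ofReal_cdf]
end
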